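/- arXiv:1704.04245 — 2 statements merged into one kernel-verified Lean document; each statement's English description precedes it below -/
import Mathlib

section
/- For every n ∈ ℤ the function Q_n satisfies: (i) the 2+1 Toda lattice equation (1/4)ΔQ_n = e^{Q_{n-1}-Q_n} − e^{Q_n-Q_{n+1}} at every point of ℝ²; (ii) the travelling-wave relation Q_{n+1}(x,y) = Q_n(x + 1/(2√2), y) for all (x,y) ∈ ℝ²; (iii) the decay estimate: there is a constant C_n > 0 with |Q_n(x,y)| ≤ C_n / √(1 + x² + y²) for all (x,y) ∈ ℝ². -/
noncomputable section

/-- Partial derivative in the first variable. -/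
def pdxR (f : ℝ → ℝ → ℝ) (x y : ℝ) : ℝ := deriv (fun x' => f x' y) x

/-- Partial derivative in the second variable. -/
def pdyR (f : ℝ → ℝ → ℝ) (x y : ℝ) : ℝ := deriv (fun y' => f x y') y

/-- The Laplacian on ℝ². -/
def lap (f : ℝ → ℝ → ℝ) (x y : ℝ) : ℝ := pdxR (pdxR f) x y + pdyR (pdyR f) x y

/-- The lump solution Q_n of the 2+1 Toda lattice. -/
def Qn (n : ℤ) (x y : ℝ) : ℝ :=
  Real.log ((1/4 + ((n : ℝ) - 1 + 2 * Real.sqrt 2 * x)^2 + 4*y^2) /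
            (1/4 + ((n : ℝ) + 2 * Real.sqrt 2 * x)^2 + 4*y^2))

/-!
Put `τ_a(x, y) = 1/4 + (a + 2√2 x)² + 4y²`, so that `Q_n = log τ_{n-1} - log τ_n`. The Toda
equation is then the bilinear identity `(1/4) Δ log τ_a = τ_{a-1} τ_{a+1} / τ_a² - 1`, which becomes
a polynomial identity once denominators are cleared, and the shift `x ↦ x + 1/(2√2)` turns `τ_a`
into `τ_{a+1}`. For the decay, `τ_{n-1} - τ_n` is affine in `x` while both `τ`'s grow quadratically,
and `|log A - log B| ≤ |A - B| / A + |A - B| / B`.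
-/

open Real

section Laplacian

variable {f fx fxx fy fyy : ℝ → ℝ → ℝ}

theorem pdxR_eq_of_hasDerivAt (h : ∀ x y, HasDerivAt (fun x' => f x' y) (fx x y) x) :
    pdxR f = fx :=
  funext fun x => funext fun y => (h x y).deriv

theorem pdyR_eq_of_hasDerivAt (h : ∀ x y, HasDerivAt (fun y' => f x y') (fy x y) y) :
    pdyR f = fy :=
  funext fun x => funext fun y => (h x y).deriv

theorem lap_eq_of_hasDerivAt
    (hx : ∀ x y, HasDerivAt (fun x' => f x' y) (fx x y) x)
    (hxx : ∀ x y, HasDerivAt (fun x' => fx x' y) (fxx x y) x)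
    (hy : ∀ x y, HasDerivAt (fun y' => f x y') (fy x y) y)
    (hyy : ∀ x y, HasDerivAt (fun y' => fy x y') (fyy x y) y) (x y : ℝ) :
    lap f x y = fxx x y + fyy x y := by
  rw [lap, pdxR_eq_of_hasDerivAt hx, pdxR_eq_of_hasDerivAt hxx, pdyR_eq_of_hasDerivAt hy,
    pdyR_eq_of_hasDerivAt hyy]

end Laplacian

theorem hasDerivAt_const_add_const_mul (a b x : ℝ) : HasDerivAt (fun x' => a + b * x') b x := by
  simpa using ((hasDerivAt_id x).const_mul b).const_add a

theorem log_sub_log_le_abs_sub_div {a b : ℝ} (ha : 0 < a) (hb : 0 < b) :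
    log a - log b ≤ |a - b| / b :=
  calc log a - log b = log (a / b) := (log_div ha.ne' hb.ne').symm
    _ ≤ a / b - 1 := log_le_sub_one_of_pos (div_pos ha hb)
    _ = (a - b) / b := by field_simp
    _ ≤ |a - b| / b := by gcongr; exact le_abs_self _

theorem abs_log_sub_log_le {a b : ℝ} (ha : 0 < a) (hb : 0 < b) :
    |log a - log b| ≤ |a - b| / a + |a - b| / b := by
  have hab := log_sub_log_le_abs_sub_div ha hb
  have hba := log_sub_log_le_abs_sub_div hb ha
  rw [abs_sub_comm b a] at hba
  exact abs_sub_le_iff.2 ⟨hab.trans (le_add_of_nonneg_left (by positivity)),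
    hba.trans (le_add_of_nonneg_right (by positivity))⟩

theorem div_le_div_sqrt_of_le_mul_sqrt {m t c K s : ℝ} (ht : 0 < t) (hs : 0 < s) (hc : 0 ≤ c)
    (hm : m ≤ c * √s) (hst : s ≤ K * t) : m / t ≤ c * K / √s := by
  rw [div_le_div_iff₀ ht (sqrt_pos.2 hs)]
  calc m * √s ≤ c * √s * √s := by gcongr
    _ = c * s := by rw [mul_assoc, mul_self_sqrt hs.le]
    _ ≤ c * K * t := by rw [mul_assoc]; gcongr

namespace Lump

def tau (a x y : ℝ) : ℝ := 1/4 + (a + 2 * √2 * x)^2 + 4 * y^2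

theorem tau_pos (a x y : ℝ) : 0 < tau a x y := by unfold tau; positivity

theorem Qn_eq_log_sub_log (n : ℤ) (x y : ℝ) :
    Qn n x y = log (tau (n - 1) x y) - log (tau n x y) :=
  log_div (tau_pos _ x y).ne' (tau_pos _ x y).ne'

theorem tau_shift (a x y : ℝ) : tau a (x + 1 / (2 * √2)) y = tau (a + 1) x y := by
  have : 2 * √2 * (x + 1 / (2 * √2)) = 2 * √2 * x + 1 := by field_simp
  unfold tau
  rw [this]
  ring

section Derivatives

variable (a x y : ℝ)

theorem hasDerivAt_tau_x :
    HasDerivAt (fun x' => tau a x' y) (4 * √2 * (a + 2 * √2 * x)) x :=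
  (((hasDerivAt_const_add_const_mul a (2 * √2) x).pow 2).const_add (1/4)).add_const (4 * y^2)
    |>.congr_deriv (by ring)

theorem hasDerivAt_tau_y : HasDerivAt (fun y' => tau a x y') (8 * y) y :=
  ((hasDerivAt_pow 2 y).const_mul 4).const_add _ |>.congr_deriv (by ring)

theorem hasDerivAt_log_tau_x :
    HasDerivAt (fun x' => log (tau a x' y)) (4 * √2 * (a + 2 * √2 * x) / tau a x y) x :=
  (hasDerivAt_tau_x a x y).log (tau_pos a x y).ne'

theorem hasDerivAt_log_tau_y :
    HasDerivAt (fun y' => log (tau a x y')) (8 * y / tau a x y) y :=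
  (hasDerivAt_tau_y a x y).log (tau_pos a x y).ne'

theorem hasDerivAt_log_tau_xx :
    HasDerivAt (fun x' => 4 * √2 * (a + 2 * √2 * x') / tau a x' y)
      ((16 * tau a x y - 32 * (a + 2 * √2 * x)^2) / tau a x y ^ 2) x := by
  refine ((hasDerivAt_const_add_const_mul a (2 * √2) x).const_mul (4 * √2)).div
    (hasDerivAt_tau_x a x y) (tau_pos a x y).ne' |>.congr_deriv ?_
  have hs : √2 ^ 2 = 2 := sq_sqrt zero_le_two
  congr 1
  linear_combination (8 * tau a x y - 16 * (a + 2 * √2 * x)^2) * hs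

theorem hasDerivAt_log_tau_yy :
    HasDerivAt (fun y' => 8 * y' / tau a x y') ((8 * tau a x y - 64 * y^2) / tau a x y ^ 2) y :=
  ((hasDerivAt_id y).const_mul 8).div (hasDerivAt_tau_y a x y) (tau_pos a x y).ne'
    |>.congr_deriv (by simp only [id]; ring)

end Derivatives

theorem lap_log_tau_sub_log_tau (a b x y : ℝ) :
    (1/4) * lap (fun x y => log (tau a x y) - log (tau b x y)) x y =
      tau (a - 1) x y * tau (a + 1) x y / tau a x y ^ 2
        - tau (b - 1) x y * tau (b + 1) x y / tau b x y ^ 2 := by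
  have quarter_lap_log_tau : ∀ c, (1/4) *
      ((16 * tau c x y - 32 * (c + 2 * √2 * x)^2) / tau c x y ^ 2
        + (8 * tau c x y - 64 * y^2) / tau c x y ^ 2) =
      tau (c - 1) x y * tau (c + 1) x y / tau c x y ^ 2 - 1 := fun c => by
    have := (tau_pos c x y).ne'
    field_simp
    unfold tau
    ring
  rw [lap_eq_of_hasDerivAt (f := fun x y => log (tau a x y) - log (tau b x y))
    (fun x y => (hasDerivAt_log_tau_x a x y).sub (hasDerivAt_log_tau_x b x y))
    (fun x y => (hasDerivAt_log_tau_xx a x y).sub (hasDerivAt_log_tau_xx b x y))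
    (fun x y => (hasDerivAt_log_tau_y a x y).sub (hasDerivAt_log_tau_y b x y))
    (fun x y => (hasDerivAt_log_tau_yy a x y).sub (hasDerivAt_log_tau_yy b x y))]
  linear_combination quarter_lap_log_tau a - quarter_lap_log_tau b

theorem exp_log_sub_log_sub_log_sub_log {p q r : ℝ} (hp : 0 < p) (hq : 0 < q) (hr : 0 < r) :
    exp ((log p - log q) - (log q - log r)) = p * r / q ^ 2 := by
  rw [← exp_log (show 0 < p * r / q ^ 2 by positivity), log_div (by positivity) (by positivity),
    log_mul hp.ne' hr.ne', log_pow]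
  congr 1
  push_cast
  ring

theorem Qn_eq_fun (n : ℤ) : Qn n = fun x y => log (tau (n - 1) x y) - log (tau n x y) :=
  funext fun x => funext fun y => Qn_eq_log_sub_log n x y

theorem toda_Qn (n : ℤ) (x y : ℝ) : (1/4) * lap (Qn n) x y =
    exp (Qn (n - 1) x y - Qn n x y) - exp (Qn n x y - Qn (n + 1) x y) := by
  simp only [Qn_eq_fun, Int.cast_sub, Int.cast_add, Int.cast_one, add_sub_cancel_right]
  rw [lap_log_tau_sub_log_tau, sub_add_cancel,
    exp_log_sub_log_sub_log_sub_log (tau_pos _ x y) (tau_pos _ x y) (tau_pos _ x y),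
    exp_log_sub_log_sub_log_sub_log (tau_pos _ x y) (tau_pos _ x y) (tau_pos _ x y)]

theorem Qn_add_one (n : ℤ) (x y : ℝ) : Qn (n + 1) x y = Qn n (x + 1 / (2 * √2)) y := by
  rw [Qn_eq_log_sub_log, Qn_eq_log_sub_log, tau_shift, tau_shift, sub_add_cancel]
  push_cast
  rw [add_sub_cancel_right]

theorem abs_tau_sub_one_sub_tau_le (a x y : ℝ) :
    |tau (a - 1) x y - tau a x y| ≤ (7 + 2 * |a|) * √(1 + x^2 + y^2) := by
  set r := √(1 + x^2 + y^2)
  have hr : 1 ≤ r := one_le_sqrt.2 (by nlinarith)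
  have hx : |x| ≤ r := abs_le_sqrt (by nlinarith)
  have hs : √2 ≤ 3/2 := by nlinarith [sq_sqrt (zero_le_two (α := ℝ)), sqrt_nonneg 2]
  have hdiff : tau (a - 1) x y - tau a x y = 1 + (-2) * a + (-4 * √2) * x := by unfold tau; ring
  calc |tau (a - 1) x y - tau a x y|
      ≤ |1| + |-2| * |a| + |-4 * √2| * |x| := by
        rw [hdiff, ← abs_mul, ← abs_mul]; exact abs_add_three _ _ _
    _ = 1 + 2 * |a| + 4 * √2 * |x| := by simp [abs_mul]
    _ ≤ (7 + 2 * |a|) * r := by nlinarith [abs_nonneg a, abs_nonneg x, sqrt_nonneg 2]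

theorem one_add_sq_add_sq_le_mul_tau (a x y : ℝ) : 1 + x^2 + y^2 ≤ 4 * (1 + a^2) * tau a x y := by
  have hs : √2 ^ 2 = 2 := sq_sqrt zero_le_two
  have hx : 8 * x^2 ≤ 2 * (a + 2 * √2 * x)^2 + 2 * a^2 := by
    nlinarith [sq_nonneg (a + 2 * √2 * x + a)]
  unfold tau
  nlinarith [mul_nonneg (sq_nonneg a) (sq_nonneg (a + 2 * √2 * x)),
    mul_nonneg (sq_nonneg a) (sq_nonneg y)]

theorem abs_Qn_le (n : ℤ) (x y : ℝ) : |Qn n x y| ≤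
    (7 + 2 * |(n:ℝ)|) * (4 * (1 + ((n:ℝ) - 1)^2) + 4 * (1 + (n:ℝ)^2)) / √(1 + x^2 + y^2) := by
  have hs : 0 < 1 + x^2 + y^2 := by positivity
  have hc : 0 ≤ 7 + 2 * |(n:ℝ)| := by positivity
  have hM := abs_tau_sub_one_sub_tau_le n x y
  rw [Qn_eq_log_sub_log]
  calc _ ≤ |tau (n - 1) x y - tau n x y| / tau (n - 1) x y
          + |tau (n - 1) x y - tau n x y| / tau n x y :=
        abs_log_sub_log_le (tau_pos _ x y) (tau_pos _ x y)
    _ ≤ (7 + 2 * |(n:ℝ)|) * (4 * (1 + ((n:ℝ) - 1)^2)) / √(1 + x^2 + y^2)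
          + (7 + 2 * |(n:ℝ)|) * (4 * (1 + (n:ℝ)^2)) / √(1 + x^2 + y^2) :=
        add_le_add
          (div_le_div_sqrt_of_le_mul_sqrt (tau_pos _ x y) hs hc hM
            (one_add_sq_add_sq_le_mul_tau _ x y))
          (div_le_div_sqrt_of_le_mul_sqrt (tau_pos _ x y) hs hc hM
            (one_add_sq_add_sq_le_mul_tau _ x y))
    _ = _ := by ring

end Lump

/-- Q_n solves the 2+1 Toda lattice, is of traveling wave type, and decays like 1/r. -/
theorem lump_properties (n : ℤ) :
    (∀ x y : ℝ, (1/4) * lap (Qn n) x y =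
      Real.exp (Qn (n-1) x y - Qn n x y) - Real.exp (Qn n x y - Qn (n+1) x y)) ∧
    (∀ x y : ℝ, Qn (n+1) x y = Qn n (x + 1/(2*Real.sqrt 2)) y) ∧
    (∃ C > (0:ℝ), ∀ x y : ℝ, |Qn n x y| ≤ C / Real.sqrt (1 + x^2 + y^2)) :=
  ⟨Lump.toda_Qn n, Lump.Qn_add_one n, _, by positivity, Lump.abs_Qn_le n⟩
end
end

section
/- Let λ ∈ ℂ, λ ≠ 0, and let τ_n, τ_n′ (n ∈ ℤ) be twice continuously differentiable complex-valued functions of (s,t) ∈ ℝ². Define 𝒫 = [D_t D_s τ_n·τ_n − 2τ_{n+1}τ_{n-1} + 2τ_n²](τ_n′)² − [D_t D_s τ_n′·τ_n′ − 2τ_{n+1}′τ_{n-1}′ + 2(τ_n′)²]τ_n². Then, pointwise on ℝ² and for every n ∈ ℤ, (1/2)𝒫 = D_t[ D_s τ_n·τ_n′ − λ τ_{n+1}τ_{n-1}′ + λ τ_n τ_n′ ]·(τ_n′ τ_n) + λ[ D_t τ_{n+1}·τ_n′ + λ^{-1} τ_n τ_{n+1}′ − λ^{-1} τ_{n+1}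 τ_n′ ] τ_{n-1}′ τ_n − λ[ D_t τ_n·τ_{n-1}′ + λ^{-1} τ_{n-1} τ_n′ − λ^{-1} τ_n τ_{n-1}′ ] τ_n′ τ_{n+1}. -/
/-! The λ-free part is the classical exchange formula
`2 D_t(D_s f·g)·(fg) = (D_tD_s f·f) g² − (D_tD_s g·g) f²`, a pure product-rule computation that
needs no symmetry of mixed partials. In the λ-part, the product rule
`D_t(ab)·(cd) = (D_t a·c) bd + ac (D_t b·d)` and the antisymmetry of `D_t` make all `D_t` terms
cancel (in particular `D_t(τ_n τ_n′)·(τ_n′ τ_n) = 0`); what is left is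
`λ λ⁻¹ (τ_n² τ_{n+1}′ τ_{n-1}′ − τ_{n+1} τ_{n-1} τ_n′²)`, matching the non-derivative terms of `𝒫/2`. -/

noncomputable section

/-- Partial derivative in the first variable s. -/
def pds (f : ℝ → ℝ → ℂ) (s t : ℝ) : ℂ := deriv (fun s' => f s' t) s

/-- Partial derivative in the second variable t. -/
def pdt (f : ℝ → ℝ → ℂ) (s t : ℝ) : ℂ := deriv (fun t' => f s t') t

/-- Hirota bilinear derivative D_s f·g. -/
def Ds (f g : ℝ → ℝ → ℂ) (s t : ℝ) : ℂ := pds f s t * g s t - f s t * pds g s t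

/-- Hirota bilinear derivative D_t f·g. -/
def Dt (f g : ℝ → ℝ → ℂ) (s t : ℝ) : ℂ := pdt f s t * g s t - f s t * pdt g s t

/-- Hirota bilinear derivative D_t D_s f·g. -/
def DtDs (f g : ℝ → ℝ → ℂ) (s t : ℝ) : ℂ :=
  pdt (pds f) s t * g s t - pds f s t * pdt g s t - pdt f s t * pds g s t
    + f s t * pdt (pds g) s t

section Hirota

variable {f g h k : ℝ → ℝ → ℂ} {s t : ℝ}

lemma pds_eq_fderiv (hf : Differentiable ℝ fun p : ℝ × ℝ => f p.1 p.2) (s t : ℝ) :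
    pds f s t = fderiv ℝ (fun p : ℝ × ℝ => f p.1 p.2) (s, t) (1, 0) :=
  ((hf (s, t)).hasFDerivAt.comp_hasDerivAt (x := s) (f := fun s' => (s', t))
    ((hasDerivAt_id s).prodMk (hasDerivAt_const s t))).deriv

lemma contDiff_pds {m n : WithTop ℕ∞} (hf : ContDiff ℝ n fun p : ℝ × ℝ => f p.1 p.2)
    (hmn : m + 1 ≤ n) : ContDiff ℝ m fun p : ℝ × ℝ => pds f p.1 p.2 := by
  have hf' : Differentiable ℝ fun p : ℝ × ℝ => f p.1 p.2 :=
    hf.differentiable (ne_bot_of_le_ne_bot (by simp) hmn)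
  simp only [pds_eq_fderiv hf']
  exact (hf.fderiv_right hmn).clm_apply contDiff_const

lemma differentiable_slice {n : WithTop ℕ∞} (hf : ContDiff ℝ n fun p : ℝ × ℝ => f p.1 p.2)
    (hn : n ≠ 0) (s : ℝ) : Differentiable ℝ fun t => f s t :=
  (hf.differentiable hn).comp ((differentiable_const s).prodMk differentiable_id)

lemma pdt_add (hf : DifferentiableAt ℝ (fun t => f s t) t)
    (hg : DifferentiableAt ℝ (fun t => g s t) t) :
    pdt (fun a b => f a b + g a b) s t = pdt f s t + pdt g s t :=
  deriv_add hf hg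

lemma pdt_sub (hf : DifferentiableAt ℝ (fun t => f s t) t)
    (hg : DifferentiableAt ℝ (fun t => g s t) t) :
    pdt (fun a b => f a b - g a b) s t = pdt f s t - pdt g s t :=
  deriv_sub hf hg

lemma pdt_mul (hf : DifferentiableAt ℝ (fun t => f s t) t)
    (hg : DifferentiableAt ℝ (fun t => g s t) t) :
    pdt (fun a b => f a b * g a b) s t = pdt f s t * g s t + f s t * pdt g s t :=
  deriv_mul hf hg

lemma pdt_const_mul (c : ℂ) (hf : DifferentiableAt ℝ (fun t => f s t) t) :
    pdt (fun a b => c * f a b) s t = c * pdt f s t :=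
  deriv_const_mul c hf

lemma Dt_swap : Dt g f s t = -Dt f g s t := by
  simp only [Dt]; ring

lemma Dt_add_left (hf : DifferentiableAt ℝ (fun t => f s t) t)
    (hg : DifferentiableAt ℝ (fun t => g s t) t) :
    Dt (fun a b => f a b + g a b) h s t = Dt f h s t + Dt g h s t := by
  simp only [Dt, pdt_add hf hg]; ring

lemma Dt_sub_left (hf : DifferentiableAt ℝ (fun t => f s t) t)
    (hg : DifferentiableAt ℝ (fun t => g s t) t) :
    Dt (fun a b => f a b - g a b) h s t = Dt f h s t - Dt g h s t := by
  simp only [Dt, pdt_sub hf hg]; ring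

lemma Dt_const_mul_left (c : ℂ) (hf : DifferentiableAt ℝ (fun t => f s t) t) :
    Dt (fun a b => c * f a b) g s t = c * Dt f g s t := by
  simp only [Dt, pdt_const_mul c hf]; ring

lemma Dt_mul_mul (hf : DifferentiableAt ℝ (fun t => f s t) t)
    (hg : DifferentiableAt ℝ (fun t => g s t) t) (hh : DifferentiableAt ℝ (fun t => h s t) t)
    (hk : DifferentiableAt ℝ (fun t => k s t) t) :
    Dt (fun a b => f a b * g a b) (fun a b => h a b * k a b) s t
      = Dt f h s t * g s t * k s t + f s t * h s t * Dt g k s t := by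
  simp only [Dt, pdt_mul hf hg, pdt_mul hh hk]; ring

lemma two_mul_Dt_Ds_mul (hf : DifferentiableAt ℝ (fun t => f s t) t)
    (hg : DifferentiableAt ℝ (fun t => g s t) t)
    (hfs : DifferentiableAt ℝ (fun t => pds f s t) t)
    (hgs : DifferentiableAt ℝ (fun t => pds g s t) t) :
    2 * Dt (Ds f g) (fun a b => f a b * g a b) s t
      = DtDs f f s t * g s t ^ 2 - DtDs g g s t * f s t ^ 2 := by
  have hDs : pdt (Ds f g) s t
      = pdt (pds f) s t * g s t + pds f s t * pdt g s t
        - (pdt f s t * pds g s t + f s t * pdt (pds g) s t) := by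
    rw [← pdt_mul hfs hg, ← pdt_mul hf hgs, ← pdt_sub (hfs.mul hg) (hf.mul hgs)]
    rfl
  simp only [Dt, DtDs, hDs, pdt_mul hf hg, Ds]
  ring

end Hirota

/-- Hirota's exchange identity underlying the Bäcklund transformation of the
2+1 Toda lattice. -/
theorem hirota_exchange_identity
    (lam : ℂ) (hlam : lam ≠ 0)
    (τ τ' : ℤ → ℝ → ℝ → ℂ)
    (hτ : ∀ n : ℤ, ContDiff ℝ 2 (fun p : ℝ × ℝ => τ n p.1 p.2))
    (hτ' : ∀ n : ℤ, ContDiff ℝ 2 (fun p : ℝ × ℝ => τ' n p.1 p.2)) :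
    ∀ (n : ℤ) (s t : ℝ),
      (1/2) * ((DtDs (τ n) (τ n) s t - 2 * τ (n+1) s t * τ (n-1) s t + 2 * (τ n s t)^2)
                  * (τ' n s t)^2
              - (DtDs (τ' n) (τ' n) s t - 2 * τ' (n+1) s t * τ' (n-1) s t + 2 * (τ' n s t)^2)
                  * (τ n s t)^2)
      = Dt (fun a b => Ds (τ n) (τ' n) a b - lam * τ (n+1) a b * τ' (n-1) a b
              + lam * τ n a b * τ' n a b)
            (fun a b => τ' n a b * τ n a b) s t
        + lam * (Dt (τ (n+1)) (τ' n) s t + lam⁻¹ * τ n s t * τ' (n+1) s t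
              - lam⁻¹ * τ (n+1) s t * τ' n s t) * τ' (n-1) s t * τ n s t
        - lam * (Dt (τ n) (τ' (n-1)) s t + lam⁻¹ * τ (n-1) s t * τ' n s t
              - lam⁻¹ * τ n s t * τ' (n-1) s t) * τ' n s t * τ (n+1) s t := by
  intro n s t
  have dτ (m : ℤ) : Differentiable ℝ fun t => τ m s t :=
    differentiable_slice (hτ m) two_ne_zero s
  have dτ' (m : ℤ) : Differentiable ℝ fun t => τ' m s t :=
    differentiable_slice (hτ' m) two_ne_zero s
  have dτs : Differentiable ℝ fun t => pds (τ n) s t :=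
    differentiable_slice (contDiff_pds (m := 1) (hτ n) le_rfl) one_ne_zero s
  have dτ's : Differentiable ℝ fun t => pds (τ' n) s t :=
    differentiable_slice (contDiff_pds (m := 1) (hτ' n) le_rfl) one_ne_zero s
  have hF : (fun a b => Ds (τ n) (τ' n) a b - lam * τ (n+1) a b * τ' (n-1) a b
      + lam * τ n a b * τ' n a b)
      = fun a b => Ds (τ n) (τ' n) a b
          + lam * (τ n a b * τ' n a b - τ (n+1) a b * τ' (n-1) a b) := by
    funext a b; ring
  have hG : (fun a b => τ' n a b * τ n a b) = fun a b => τ n a b * τ' n a b := by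
    funext a b; ring
  have hDs : DifferentiableAt ℝ (fun t => Ds (τ n) (τ' n) s t) t :=
    ((dτs t).mul (dτ' n t)).sub ((dτ n t).mul (dτ's t))
  have hexch := two_mul_Dt_Ds_mul (dτ n t) (dτ' n t) (dτs t) (dτ's t)
  rw [← hG] at hexch
  rw [hF, Dt_add_left hDs (by fun_prop), Dt_const_mul_left _ (by fun_prop),
    Dt_sub_left (by fun_prop) (by fun_prop), Dt_mul_mul (dτ n t) (dτ' n t) (dτ' n t) (dτ n t),
    Dt_mul_mul (dτ (n+1) t) (dτ' (n-1) t) (dτ' n t) (dτ n t), Dt_swap (f := τ n) (g := τ' n),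
    Dt_swap (f := τ n) (g := τ' (n-1))]
  linear_combination (-1/2 : ℂ) * hexch
    - (τ n s t ^ 2 * τ' (n+1) s t * τ' (n-1) s t - τ (n+1) s t * τ (n-1) s t * τ' n s t ^ 2)
      * mul_inv_cancel₀ hlam
end
end
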